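/- arXiv:1212.1018 — 7 statements merged into one kernel-verified Lean document; each statement's English description precedes it below -/
import Mathlib

section
/- Let A be a small category with object set X. If for every right A-module Q the canonical map β_Q : {(q,a) | s(q) = t(q) = t(a)} → {(q,a) | s(q) = s(a), t(q) = t(a)}, (q,a) ↦ (q.a, a), is a bijection, then A is a groupoid, i.e., every morphism of A is invertible. -/
/-- A small category with object set `X`, presented as a monoid in the duoidal
category of spans over `X`: morphisms `A` with source/target maps, composition
`comp b a` (defined when `s b = t a`, "first `a`, then `b`") and identities. -/
structure SpanCat (X : Type) where
  A : Type
  s : A → X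
  t : A → X
  comp : ∀ (b a : A), s b = t a → A
  one : X → A
  s_comp : ∀ b a h, s (comp b a h) = s a
  t_comp : ∀ b a h, t (comp b a h) = t b
  s_one : ∀ x, s (one x) = x
  t_one : ∀ x, t (one x) = x
  assoc : ∀ (c b a : A) (h1 : s c = t b) (h2 : s b = t a),
    comp (comp c b h1) a ((s_comp c b h1).trans h2) =
      comp c (comp b a h2) (h1.trans (t_comp b a h2).symm)
  comp_one : ∀ a, comp a (one (s a)) (t_one (s a)).symm = a
  one_comp : ∀ a, comp (one (t a)) a (s_one (t a)) = a

/-- A right module over a small category `C` (viewed as a monoid in spans over `X`):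
a span `Q` over `X` with an associative unital action `act q a` defined when
`s q = t a`, satisfying `s (q.a) = s a` and `t (q.a) = t q`. -/
structure SpanMod (X : Type) (C : SpanCat X) where
  Q : Type
  s : Q → X
  t : Q → X
  act : ∀ (q : Q) (a : C.A), s q = C.t a → Q
  s_act : ∀ q a h, s (act q a h) = C.s a
  t_act : ∀ q a h, t (act q a h) = t q
  act_assoc : ∀ q a b (h1 : s q = C.t a) (h2 : C.s a = C.t b),
    act (act q a h1) b ((s_act q a h1).trans h2) =
      act q (C.comp a b h2) (h1.trans (C.t_comp a b h2).symm)
  act_one : ∀ q, act q (C.one (s q)) (C.t_one (s q)).symm = q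

/-- The canonical map `β_Q : {(q,a) | s q = t q = t a} → {(q,a) | s q = s a, t q = t a}`,
`(q, a) ↦ (q.a, a)`. -/
def betaMap {X : Type} (C : SpanCat X) (M : SpanMod X C) :
    {p : M.Q × C.A // M.s p.1 = M.t p.1 ∧ M.t p.1 = C.t p.2} →
    {p : M.Q × C.A // M.s p.1 = C.s p.2 ∧ M.t p.1 = C.t p.2} :=
  fun p => ⟨(M.act p.1.1 p.1.2 (p.2.1.trans p.2.2), p.1.2),
    M.s_act _ _ _, (M.t_act _ _ _).trans p.2.2⟩

/-! For the right regular module with all targets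
collapsed to `t a`, a preimage of `(1_{s a}, a)` is a pair `(b, a)` with `b.a = 1_{s a}`,
so every morphism has a left inverse; in a category this forces every morphism to be
invertible, since a left inverse `c` of a left inverse `b` of `a` satisfies
`c = c.(b.a) = (c.b).a = a`. -/

namespace SpanCat

variable {X : Type} (C : SpanCat X)

theorem comp_congr {b₁ b₂ a₁ a₂ : C.A} (hb : b₁ = b₂) (ha : a₁ = a₂)
    (h₁ : C.s b₁ = C.t a₁) (h₂ : C.s b₂ = C.t a₂) :
    C.comp b₁ a₁ h₁ = C.comp b₂ a₂ h₂ := by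
  subst hb ha; rfl

variable {C}

theorem t_eq_of_comp_eq_one {b a : C.A} {h : C.s b = C.t a} {x : X}
    (hba : C.comp b a h = C.one x) : C.t b = x := by
  rw [← C.t_comp b a h, hba, C.t_one]

theorem eq_of_comp_eq_one {a b c : C.A} (hab : C.s b = C.t a) (hbc : C.s c = C.t b)
    (hba : C.comp b a hab = C.one (C.s a)) (hcb : C.comp c b hbc = C.one (C.s b)) :
    c = a := by
  have hsc : C.s c = C.s a := hbc.trans (t_eq_of_comp_eq_one hba)
  calc c = C.comp c (C.one (C.s c)) (C.t_one _).symm := (C.comp_one c).symm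
    _ = C.comp c (C.comp b a hab) (hbc.trans (C.t_comp b a hab).symm) :=
        C.comp_congr rfl (hsc ▸ hba.symm) _ _
    _ = C.comp (C.comp c b hbc) a ((C.s_comp c b hbc).trans hab) :=
        (C.assoc c b a hbc hab).symm
    _ = C.comp (C.one (C.t a)) a (C.s_one _) := C.comp_congr (hab ▸ hcb) rfl _ _
    _ = a := C.one_comp a

theorem exists_inverse_of_forall_exists_left_inverse
    (hleft : ∀ a : C.A, ∃ (b : C.A) (h : C.s b = C.t a), C.comp b a h = C.one (C.s a))
    (a : C.A) :
    ∃ (b : C.A) (h1 : C.s b = C.t a) (h2 : C.s a = C.t b),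
      C.comp b a h1 = C.one (C.s a) ∧ C.comp a b h2 = C.one (C.t a) := by
  obtain ⟨b, hab, hba⟩ := hleft a
  obtain ⟨c, hbc, hcb⟩ := hleft b
  obtain rfl : c = a := eq_of_comp_eq_one hab hbc hba hcb
  exact ⟨b, hab, (t_eq_of_comp_eq_one hba).symm, hba, hcb.trans (congrArg C.one hab)⟩

variable (C)

/-- The right regular module with every target replaced by `x`: the domain of `β` then
consists of the pairs `(q, a)` with `s q = x = t a`. -/
def regularModuleWithTarget (x : X) : SpanMod X C where
  Q := C.A
  s := C.s
  t := fun _ => x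
  act := C.comp
  s_act := C.s_comp
  t_act := fun _ _ _ => rfl
  act_assoc := C.assoc
  act_one := C.comp_one

variable {C}

theorem exists_left_inverse_of_surjective_betaMap {a : C.A}
    (hβ : Function.Surjective (betaMap C (C.regularModuleWithTarget (C.t a)))) :
    ∃ (b : C.A) (h : C.s b = C.t a), C.comp b a h = C.one (C.s a) := by
  obtain ⟨⟨⟨b, a'⟩, hb⟩, hβb⟩ := hβ ⟨(C.one (C.s a), a), C.s_one _, rfl⟩
  obtain rfl : a' = a := congrArg (·.1.2) hβb
  exact ⟨b, hb.1, congrArg (·.1.1) hβb⟩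

end SpanCat

/-- If for every right `A`-module `Q` the canonical map `β_Q : (q,a) ↦ (q.a, a)` is
a bijection, then the small category `A` is a groupoid: every morphism is invertible. -/
theorem stmt3 {X : Type} (C : SpanCat X)
    (h : ∀ M : SpanMod X C, Function.Bijective (betaMap C M)) :
    ∀ a : C.A, ∃ (b : C.A) (h1 : C.s b = C.t a) (h2 : C.s a = C.t b),
      C.comp b a h1 = C.one (C.s a) ∧ C.comp a b h2 = C.one (C.t a) :=
  SpanCat.exists_inverse_of_forall_exists_left_inverse fun _ =>
    SpanCat.exists_left_inverse_of_surjective_betaMap (h _).2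
end

section
/- Let A be a small category such that the map β_A : {(b,a) ∈ A × A | s(b) = t(b) = t(a)} → {(b,a) ∈ A × A | s(b) = s(a), t(b) = t(a)}, (b,a) ↦ (b∘a, a), is a bijection. Then every endomorphism of A is invertible: for every c ∈ A with s(c) = t(c) = x, there exists c⁻¹ ∈ A with c⁻¹ ∘ c = 1_x = c ∘ c⁻¹. -/
/-- The small category `C` as a right module over itself, via composition. -/
def selfMod {X : Type} (C : SpanCat X) : SpanMod X C where
  Q := C.A
  s := C.s
  t := C.t
  act := C.comp
  s_act := C.s_comp
  t_act := C.t_comp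
  act_assoc := C.assoc
  act_one := C.comp_one

theorem mul_eq_one_comm_of_forall_exists_mul_eq_one {M : Type*} [Monoid M]
    (h : ∀ a : M, ∃ b, b * a = 1) {a b : M} (hba : b * a = 1) : a * b = 1 := by
  obtain ⟨p, hpb⟩ := h b
  rwa [left_inv_eq_right_inv hpb hba] at hpb

namespace SpanCat

variable {X : Type} (C : SpanCat X)

theorem comp_one_of_eq {a : C.A} {x : X} (h : C.s a = C.t (C.one x)) :
    C.comp a (C.one x) h = a := by
  obtain rfl : C.s a = x := h.trans (C.t_one x)
  exact C.comp_one a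

theorem one_comp_of_eq {a : C.A} {x : X} (h : C.s (C.one x) = C.t a) :
    C.comp (C.one x) a h = a := by
  obtain rfl : C.t a = x := h.symm.trans (C.s_one x)
  exact C.one_comp a

def End (x : X) : Type := {c : C.A // C.s c = x ∧ C.t c = x}

instance (x : X) : Monoid (C.End x) where
  mul b a := ⟨C.comp b.1 a.1 (b.2.1.trans a.2.2.symm),
    (C.s_comp _ _ _).trans a.2.1, (C.t_comp _ _ _).trans b.2.2⟩
  one := ⟨C.one x, C.s_one x, C.t_one x⟩
  mul_assoc c b a := Subtype.ext (C.assoc _ _ _ _ _)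
  one_mul a := Subtype.ext (C.one_comp_of_eq _)
  mul_one a := Subtype.ext (C.comp_one_of_eq _)

theorem exists_mul_eq_one_of_surjective_betaMap
    (hβ : Function.Surjective (betaMap C (selfMod C))) {x : X} (c : C.End x) :
    ∃ b : C.End x, b * c = 1 := by
  obtain ⟨⟨⟨q, a⟩, hq_endo, hq_t⟩, hpre⟩ :=
    hβ ⟨(C.one x, c.1), (C.s_one x).trans c.2.1.symm, (C.t_one x).trans c.2.2.symm⟩
  obtain ⟨hqa, rfl⟩ := Prod.mk.inj (congrArg Subtype.val hpre)
  have hq_t' : C.t q = x := hq_t.trans c.2.2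
  exact ⟨⟨q, hq_endo.trans hq_t', hq_t'⟩, Subtype.ext hqa⟩

end SpanCat

/-- If the canonical map `β_A : (b,a) ↦ (b∘a, a)` (with `A` acting on itself by
composition) is a bijection, then every endomorphism `c` of `A` is invertible. -/
theorem stmt4 {X : Type} (C : SpanCat X)
    (h : Function.Bijective (betaMap C (selfMod C))) :
    ∀ (c : C.A), C.s c = C.t c →
      ∃ (b : C.A) (h1 : C.s b = C.t c) (h2 : C.s c = C.t b),
        C.comp b c h1 = C.one (C.s c) ∧ C.comp c b h2 = C.one (C.s c) := by
  intro c hc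
  have hleft := C.exists_mul_eq_one_of_surjective_betaMap h.2 (x := C.s c)
  let e : C.End (C.s c) := ⟨c, rfl, hc.symm⟩
  obtain ⟨b, hbe⟩ := hleft e
  have heb : e * b = 1 := mul_eq_one_comm_of_forall_exists_mul_eq_one hleft hbe
  exact ⟨b.1, b.2.1.trans hc, b.2.2.symm, congrArg Subtype.val hbe, congrArg Subtype.val heb⟩
end

section
/- Let R be a commutative algebra over a commutative ring k, and for R-bimodules M, N define M ∘ N := (M ⊗_k N)/⟨r·m·r' ⊗ n − m ⊗ r·n·r' | r, r' ∈ R⟩, and set J := R with its canonical bimodule structure. Then for every R-bimodule M there is a natural isomorphism M ∘ J ≅ M/[M,R], realized by the mutually inverse maps m ∘ r ↦ [r·m] and [m] ↦ m ∘ 1. In particular, J ∘ J ≅ J via multiplication, so the endofunctor (−) ∘ J on R-bimodules is an idempotent monad. -/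
open TensorProduct

/-- An `R`-bimodule structure (over the commutative `k`-algebra `R`) on the
`k`-module `M`: two commuting `R`-actions, given as `k`-algebra homomorphisms
into the `k`-linear endomorphisms of `M`. -/
structure BimodStr (k R M : Type) [CommRing k] [CommRing R] [Algebra k R]
    [AddCommGroup M] [Module k M] where
  l : R →ₐ[k] Module.End k M
  r : R →ₐ[k] Module.End k M
  comm : ∀ (a b : R) (m : M), l a (r b m) = r b (l a m)

/-- The commutator sub-bimodule `[M,R]`, generated by all `r·m − m·r`. -/
def BimodStr.bracket {k R M : Type} [CommRing k] [CommRing R] [Algebra k R]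
    [AddCommGroup M] [Module k M] (B : BimodStr k R M) : Submodule k M :=
  Submodule.span k {x | ∃ (a : R) (m : M), x = B.l a m - B.r a m}

/-- `R` itself as an `R`-bimodule (the unit object `J`). -/
def Jbim (k R : Type) [CommRing k] [CommRing R] [Algebra k R] : BimodStr k R R where
  l := Algebra.lmul k R
  r := Algebra.lmul k R
  comm := fun a b m => by
    simp [Algebra.lmul, mul_left_comm]

/-- The defining relations of `M ∘ N`: `r·m·r' ⊗ n − m ⊗ r·n·r'`. -/
def circSub {k R M N : Type} [CommRing k] [CommRing R] [Algebra k R]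
    [AddCommGroup M] [Module k M] [AddCommGroup N] [Module k N]
    (B : BimodStr k R M) (C : BimodStr k R N) :
    Submodule k (TensorProduct k M N) :=
  Submodule.span k {x | ∃ (a a' : R) (m : M) (n : N),
    x = (B.l a (B.r a' m)) ⊗ₜ[k] n - m ⊗ₜ[k] (C.l a (C.r a' n))}

/-- The monoidal product `M ∘ N = (M ⊗_k N)/⟨r·m·r' ⊗ n − m ⊗ r·n·r'⟩`. -/
abbrev circ {k R M N : Type} [CommRing k] [CommRing R] [Algebra k R]
    [AddCommGroup M] [Module k M] [AddCommGroup N] [Module k N]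
    (B : BimodStr k R M) (C : BimodStr k R N) :=
  TensorProduct k M N ⧸ circSub B C

/-! The maps `m ⊗ a ↦ [a·m]` and `m ↦ m ⊗ 1` descend to `M ∘ J` and `M/[M,R]` respectively:
the relations of `M ∘ J` move scalars freely across `⊗`, so `a·m ⊗ 1 = m ⊗ a = m·a ⊗ 1`, while
in `M/[M,R]` the two actions agree and therefore compose into a single action of `R`. For
`M = J` the two actions are equal, so `[J,R] = 0` and `J ∘ J ≅ J`. -/

open TensorProduct

theorem Jbim_l_apply (k R : Type) [CommRing k] [CommRing R] [Algebra k R] (a b : R) :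
    (Jbim k R).l a b = a * b := rfl

theorem Jbim_r_apply (k R : Type) [CommRing k] [CommRing R] [Algebra k R] (a b : R) :
    (Jbim k R).r a b = a * b := rfl

namespace BimodStr

variable {k R M N : Type} [CommRing k] [CommRing R] [Algebra k R]
  [AddCommGroup M] [Module k M] [AddCommGroup N] [Module k N]

theorem l_sub_r_mem_bracket (B : BimodStr k R M) (a : R) (m : M) :
    B.l a m - B.r a m ∈ B.bracket :=
  Submodule.subset_span ⟨a, m, rfl⟩

theorem mk_l_eq_mk_r (B : BimodStr k R M) (a : R) (m : M) :
    (Submodule.Quotient.mk (B.l a m) : M ⧸ B.bracket) = Submodule.Quotient.mk (B.r a m) :=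
  (Submodule.Quotient.eq _).2 (B.l_sub_r_mem_bracket a m)

theorem mk_l_r (B : BimodStr k R M) (a b : R) (m : M) :
    (Submodule.Quotient.mk (B.l a (B.r b m)) : M ⧸ B.bracket) =
      Submodule.Quotient.mk (B.l (a * b) m) := by
  rw [B.comm, ← B.mk_l_eq_mk_r, mul_comm, map_mul, Module.End.mul_apply]

theorem circ_mk_l_tmul (B : BimodStr k R M) (C : BimodStr k R N) (a : R) (m : M) (n : N) :
    (Submodule.Quotient.mk (B.l a m ⊗ₜ[k] n) : circ B C) =
      Submodule.Quotient.mk (m ⊗ₜ[k] C.l a n) := by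
  refine (Submodule.Quotient.eq _).2 (Submodule.subset_span ⟨a, 1, m, n, ?_⟩)
  simp only [map_one, Module.End.one_apply]

theorem circ_mk_r_tmul (B : BimodStr k R M) (C : BimodStr k R N) (a : R) (m : M) (n : N) :
    (Submodule.Quotient.mk (B.r a m ⊗ₜ[k] n) : circ B C) =
      Submodule.Quotient.mk (m ⊗ₜ[k] C.r a n) := by
  refine (Submodule.Quotient.eq _).2 (Submodule.subset_span ⟨1, a, m, n, ?_⟩)
  simp only [map_one, Module.End.one_apply]

theorem circ_mk_l_tmul_one (B : BimodStr k R M) (a : R) (m : M) :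
    (Submodule.Quotient.mk (B.l a m ⊗ₜ[k] (1 : R)) : circ B (Jbim k R)) =
      Submodule.Quotient.mk (m ⊗ₜ[k] a) := by
  rw [circ_mk_l_tmul, Jbim_l_apply, mul_one]

noncomputable def tensorToQuotBracket (B : BimodStr k R M) :
    M ⊗[k] R →ₗ[k] M ⧸ B.bracket :=
  TensorProduct.lift
    ((LinearMap.llcomp k M M (M ⧸ B.bracket) B.bracket.mkQ ∘ₗ B.l.toLinearMap).flip)

@[simp]
theorem tensorToQuotBracket_tmul (B : BimodStr k R M) (m : M) (a : R) :
    B.tensorToQuotBracket (m ⊗ₜ a) = Submodule.Quotient.mk (B.l a m) :=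
  rfl

theorem circSub_le_ker_tensorToQuotBracket (B : BimodStr k R M) :
    circSub B (Jbim k R) ≤ LinearMap.ker B.tensorToQuotBracket := by
  rw [circSub, Submodule.span_le]
  rintro _ ⟨a, a', m, n, rfl⟩
  have key : (Submodule.Quotient.mk (B.l n (B.l a (B.r a' m))) : M ⧸ B.bracket) =
      Submodule.Quotient.mk (B.l (a * (a' * n)) m) := by
    rw [← Module.End.mul_apply, ← map_mul, mk_l_r]
    ring_nf
  rw [SetLike.mem_coe, LinearMap.mem_ker, map_sub, sub_eq_zero,
    tensorToQuotBracket_tmul, tensorToQuotBracket_tmul, Jbim_l_apply, Jbim_r_apply, key]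

noncomputable def toCircJbim (B : BimodStr k R M) : M →ₗ[k] circ B (Jbim k R) :=
  (circSub B (Jbim k R)).mkQ ∘ₗ (TensorProduct.mk k M R).flip 1

@[simp]
theorem toCircJbim_apply (B : BimodStr k R M) (m : M) :
    B.toCircJbim m = Submodule.Quotient.mk (m ⊗ₜ[k] (1 : R)) :=
  rfl

theorem bracket_le_ker_toCircJbim (B : BimodStr k R M) :
    B.bracket ≤ LinearMap.ker B.toCircJbim := by
  rw [bracket, Submodule.span_le]
  rintro _ ⟨a, m, rfl⟩
  rw [SetLike.mem_coe, LinearMap.mem_ker, map_sub, sub_eq_zero, toCircJbim_apply,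
    toCircJbim_apply, circ_mk_l_tmul, circ_mk_r_tmul, Jbim_l_apply, Jbim_r_apply]

noncomputable def circJbimEquivQuotBracket (B : BimodStr k R M) :
    circ B (Jbim k R) ≃ₗ[k] M ⧸ B.bracket :=
  LinearEquiv.ofLinearMap
    ((circSub B (Jbim k R)).liftQ _ B.circSub_le_ker_tensorToQuotBracket)
    (B.bracket.liftQ _ B.bracket_le_ker_toCircJbim)
    (by ext m; simp)
    (by ext m a; simp [circ_mk_l_tmul_one])

theorem circJbimEquivQuotBracket_mk_tmul (B : BimodStr k R M) (m : M) (a : R) :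
    B.circJbimEquivQuotBracket (Submodule.Quotient.mk (m ⊗ₜ[k] a)) =
      Submodule.Quotient.mk (B.l a m) :=
  rfl

theorem circJbimEquivQuotBracket_symm_mk (B : BimodStr k R M) (m : M) :
    B.circJbimEquivQuotBracket.symm (Submodule.Quotient.mk m) =
      Submodule.Quotient.mk (m ⊗ₜ[k] (1 : R)) :=
  rfl

end BimodStr

theorem Jbim_bracket_eq_bot (k R : Type) [CommRing k] [CommRing R] [Algebra k R] :
    (Jbim k R).bracket = ⊥ := by
  rw [BimodStr.bracket, Submodule.span_eq_bot]
  rintro _ ⟨a, b, rfl⟩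
  exact sub_self _

noncomputable def circJbimJbimEquiv (k R : Type) [CommRing k] [CommRing R] [Algebra k R] :
    circ (Jbim k R) (Jbim k R) ≃ₗ[k] R :=
  (Jbim k R).circJbimEquivQuotBracket.trans
    (Submodule.quotEquivOfEqBot _ (Jbim_bracket_eq_bot k R))

theorem circJbimJbimEquiv_mk_tmul (k R : Type) [CommRing k] [CommRing R] [Algebra k R]
    (a b : R) : circJbimJbimEquiv k R (Submodule.Quotient.mk (a ⊗ₜ[k] b)) = a * b := by
  rw [circJbimJbimEquiv, LinearEquiv.trans_apply, BimodStr.circJbimEquivQuotBracket_mk_tmul,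
    Submodule.quotEquivOfEqBot_apply_mk, Jbim_l_apply, mul_comm]

/-- `M ∘ J ≅ M/[M,R]` via `m ∘ r ↦ [r·m]` with inverse `[m] ↦ m ∘ 1`; in
particular `J ∘ J ≅ J` via multiplication, and `(−) ∘ J` is an idempotent monad:
the two induced `R`-actions on `M/[M,R]` coincide. -/
theorem stmt7 (k R : Type) [CommRing k] [CommRing R] [Algebra k R]
    (M : Type) [AddCommGroup M] [Module k M] (B : BimodStr k R M) :
    (∃ e : circ B (Jbim k R) ≃ₗ[k] (M ⧸ B.bracket),
      (∀ (m : M) (a : R),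
        e (Submodule.Quotient.mk (m ⊗ₜ[k] a)) = Submodule.Quotient.mk (B.l a m)) ∧
      (∀ m : M,
        e.symm (Submodule.Quotient.mk m) = Submodule.Quotient.mk (m ⊗ₜ[k] (1:R)))) ∧
    (∃ e' : circ (Jbim k R) (Jbim k R) ≃ₗ[k] R,
      ∀ a b : R, e' (Submodule.Quotient.mk (a ⊗ₜ[k] b)) = a * b) ∧
    (∀ (a : R) (m : M), B.l a m - B.r a m ∈ B.bracket) := by
  exact ⟨⟨B.circJbimEquivQuotBracket, B.circJbimEquivQuotBracket_mk_tmul,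
      B.circJbimEquivQuotBracket_symm_mk⟩,
    ⟨circJbimJbimEquiv k R, circJbimJbimEquiv_mk_tmul k R⟩, B.l_sub_r_mem_bracket⟩
end

section
/- Let k be a commutative ring, R a commutative k-algebra, and A an R-bialgebroid whose source and target maps s, t : R → A land in the center of A, and which admits an antipode S : A → A satisfying S(a s(r)) = t(r) S(a), S(t(r) a) = S(a) s(r), a₁ S(a₂) = s(ε(a)), and S(a₁) a₂ = t(ε(a)). Then for every right A-comodule Q, the map ς_Q : Q ∘ A → (Q/[Q,R]) ⊗_R A, q ∘ a ↦ [q₀] ⊗ q₁ a, is an isomorphism, with inverse [q] ⊗ a ↦ q₀ ∘ S(q₁) a. -/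
open TensorProduct

section Bialgebroid

variable (k R A : Type) [CommRing k] [CommRing R] [Algebra k R]
  [Ring A] [Algebra k A]

/-- The relations defining the bimodule tensor square `A ⊗_R A`
(right action on the first leg, left action on the second):
`(t r * a) ⊗ b − a ⊗ (s r * b)`. -/
def corel (s t : R →ₐ[k] A) : Submodule k (TensorProduct k A A) :=
  Submodule.span k {x | ∃ (r : R) (b c : A),
    x = (t r * b) ⊗ₜ[k] c - b ⊗ₜ[k] (s r * c)}

/-- The analogous relations in `A ⊗ A ⊗ A` (both middle identifications). -/
def corel3 (s t : R →ₐ[k] A) :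
    Submodule k (TensorProduct k A (TensorProduct k A A)) :=
  Submodule.span k
    ({x | ∃ (r : R) (b c d : A),
        x = (t r * b) ⊗ₜ[k] (c ⊗ₜ[k] d) - b ⊗ₜ[k] ((s r * c) ⊗ₜ[k] d)} ∪
     {x | ∃ (r : R) (b c d : A),
        x = b ⊗ₜ[k] ((t r * c) ⊗ₜ[k] d) - b ⊗ₜ[k] (c ⊗ₜ[k] (s r * d))})

/-- An `R`-bialgebroid (`×_R`-bialgebra) whose source and target maps land in the
center of `A`: a `k`-algebra `A` with central algebra maps `src, tgt : R → A`
(so `r·a·r' = src r * tgt r' * a`), an `R`-coring structure, given by a chosen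
representative `comul : A → A ⊗_k A` of the comultiplication `A → A ⊗_R A` and the
counit, such that comultiplication and counit are algebra maps. -/
structure Bialgebroid where
  src : R →ₐ[k] A
  tgt : R →ₐ[k] A
  src_central : ∀ (r : R) (a : A), src r * a = a * src r
  tgt_central : ∀ (r : R) (a : A), tgt r * a = a * tgt r
  comul : A →ₗ[k] TensorProduct k A A
  counit : A →ₐ[k] R
  counit_left : ∀ (r : R) (a : A), counit (src r * a) = r * counit a
  counit_right : ∀ (r : R) (a : A), counit (tgt r * a) = r * counit a
  comul_counit_left : ∀ a : A,
    TensorProduct.lift ((LinearMap.mul k A) ∘ₗ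
      (src.toLinearMap ∘ₗ counit.toLinearMap)) (comul a) = a
  comul_counit_right : ∀ a : A,
    TensorProduct.lift (((LinearMap.mul k A) ∘ₗ
      (tgt.toLinearMap ∘ₗ counit.toLinearMap)).flip) (comul a) = a
  coassoc : ∀ a : A,
    (Submodule.Quotient.mk ((TensorProduct.assoc k A A A)
        ((LinearMap.rTensor A comul) (comul a))) :
      _ ⧸ corel3 k R A src tgt) =
    Submodule.Quotient.mk ((LinearMap.lTensor A comul) (comul a))
  comul_mul : ∀ a b : A,
    (Submodule.Quotient.mk (comul (a * b)) : _ ⧸ corel k R A src tgt) =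
      Submodule.Quotient.mk (comul a * comul b)
  comul_one :
    (Submodule.Quotient.mk (comul 1) : _ ⧸ corel k R A src tgt) =
      Submodule.Quotient.mk 1
  comul_src : ∀ (r : R) (a : A),
    (Submodule.Quotient.mk (comul (src r * a)) : _ ⧸ corel k R A src tgt) =
      Submodule.Quotient.mk (((src r) ⊗ₜ[k] (1:A)) * comul a)
  comul_tgt : ∀ (r : R) (a : A),
    (Submodule.Quotient.mk (comul (tgt r * a)) : _ ⧸ corel k R A src tgt) =
      Submodule.Quotient.mk (comul a * ((1:A) ⊗ₜ[k] (tgt r)))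

end Bialgebroid

section Comodule

variable {k R A : Type} [CommRing k] [CommRing R] [Algebra k R]
  [Ring A] [Algebra k A]

/-- A right comodule over the bialgebroid `Bg`: an `R`-bimodule `Q` (commuting
actions `ql`, `qr`) with a coassociative counital `R`-bimodule coaction, given by
a chosen representative `coact : Q → Q ⊗_k A` of the coaction `Q → Q ⊗_R A`. -/
structure Comod (Bg : Bialgebroid k R A) (Q : Type)
    [AddCommGroup Q] [Module k Q] where
  ql : R →ₐ[k] Module.End k Q
  qr : R →ₐ[k] Module.End k Q
  actcomm : ∀ (r r' : R) (q : Q), ql r (qr r' q) = qr r' (ql r q)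
  coact : Q →ₗ[k] TensorProduct k Q A
  counital : ∀ q : Q,
    TensorProduct.lift
      (LinearMap.flip ((qr.toLinearMap : R →ₗ[k] Module.End k Q) ∘ₗ
        Bg.counit.toLinearMap)) (coact q) = q
  coassoc : ∀ q : Q,
    (Submodule.Quotient.mk ((TensorProduct.assoc k Q A A)
        ((LinearMap.rTensor A coact) (coact q))) :
      _ ⧸ Submodule.span k
        ({x | ∃ (r : R) (p : Q) (c d : A),
            x = (qr r p) ⊗ₜ[k] (c ⊗ₜ[k] d) - p ⊗ₜ[k] ((Bg.src r * c) ⊗ₜ[k] d)} ∪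
         {x | ∃ (r : R) (p : Q) (c d : A),
            x = p ⊗ₜ[k] ((Bg.tgt r * c) ⊗ₜ[k] d) - p ⊗ₜ[k] (c ⊗ₜ[k] (Bg.src r * d))})) =
    Submodule.Quotient.mk ((LinearMap.lTensor Q Bg.comul) (coact q))
  coact_left : ∀ (r : R) (q : Q),
    (Submodule.Quotient.mk (coact (ql r q)) :
      _ ⧸ Submodule.span k {x | ∃ (r' : R) (p : Q) (c : A),
            x = (qr r' p) ⊗ₜ[k] c - p ⊗ₜ[k] (Bg.src r' * c)}) =
      Submodule.Quotient.mk ((LinearMap.rTensor A (ql r)) (coact q))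
  coact_right : ∀ (r : R) (q : Q),
    (Submodule.Quotient.mk (coact (qr r q)) :
      _ ⧸ Submodule.span k {x | ∃ (r' : R) (p : Q) (c : A),
            x = (qr r' p) ⊗ₜ[k] c - p ⊗ₜ[k] (Bg.src r' * c)}) =
      Submodule.Quotient.mk ((LinearMap.lTensor Q (LinearMap.mulLeft k (Bg.tgt r))) (coact q))

end Comodule

section Stmt9

variable {k R A : Type} [CommRing k] [CommRing R] [Algebra k R]
  [Ring A] [Algebra k A]

/-- The relations of `Q ∘ A`: `r·q·r' ⊗ a − q ⊗ r·a·r'`. -/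
def circRel (Bg : Bialgebroid k R A) {Q : Type} [AddCommGroup Q] [Module k Q]
    (C : Comod Bg Q) : Submodule k (TensorProduct k Q A) :=
  Submodule.span k {x | ∃ (r r' : R) (q : Q) (a : A),
    x = (C.ql r (C.qr r' q)) ⊗ₜ[k] a - q ⊗ₜ[k] (Bg.src r * (Bg.tgt r' * a))}

/-- The relations of `(Q/[Q,R]) ⊗_R A`. -/
def targRel (Bg : Bialgebroid k R A) {Q : Type} [AddCommGroup Q] [Module k Q]
    (C : Comod Bg Q) : Submodule k (TensorProduct k Q A) :=
  Submodule.span k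
    ({x | ∃ (r : R) (q : Q) (a : A), x = (C.ql r q) ⊗ₜ[k] a - (C.qr r q) ⊗ₜ[k] a} ∪
     {x | ∃ (r : R) (q : Q) (a : A), x = (C.qr r q) ⊗ₜ[k] a - q ⊗ₜ[k] (Bg.src r * a)})

/-!
`ς_Q` and its inverse are induced by the maps `q ⊗ a ↦ q₀ ⊗ φ(q₁) a` on `Q ⊗_k A` for
`φ = id` and `φ = S`. The bimodule property of the coaction, together with
`S(a s(r)) = t(r) S(a)` and `S(t(r) a) = S(a) s(r)`, shows that each of them maps the relations
of its source into those of its target. Both composites send `q ⊗ a` to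
`q₀₀ ⊗ ψ(q₀₁) φ(q₁) a`; coassociativity turns this into `q₀ ⊗ ψ(q₁₍₁₎) φ(q₁₍₂₎) a`, the antipode
axioms collapse it to `q₀ ⊗ u(ε(q₁)) a` with `u = t` or `u = s`, and counitality of the coaction
brings it back to `q ⊗ a` modulo the relations.
-/

section QuotientMaps

variable {M N : Type} [AddCommGroup M] [Module k M] [AddCommGroup N] [Module k N]
  {p : Submodule k M} {q : Submodule k N}

theorem Submodule.mkQ_apply_eq_of_le_comap {f : M →ₗ[k] N} (hf : p ≤ q.comap f) {x y : M}
    (hxy : p.mkQ x = p.mkQ y) : q.mkQ (f x) = q.mkQ (f y) := by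
  simpa only [← LinearMap.comp_apply, ← Submodule.mapQ_mkQ p q f (h := hf)] using
    congrArg (p.mapQ q f hf) hxy

theorem Submodule.sub_mem_comap_of_mkQ_eq {f : M →ₗ[k] N} {x y : M}
    (h : q.mkQ (f x) = q.mkQ (f y)) : x - y ∈ q.comap f := by
  rw [Submodule.mem_comap, map_sub]
  exact (Submodule.Quotient.eq q).1 h

theorem Submodule.mapQ_comp_mapQ_eq_id {f : M →ₗ[k] N} {g : N →ₗ[k] M}
    (hf : p ≤ q.comap f) (hg : q ≤ p.comap g) (hgf : p.mkQ ∘ₗ g ∘ₗ f = p.mkQ) :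
    q.mapQ p g hg ∘ₗ p.mapQ q f hf = LinearMap.id :=
  Submodule.linearMap_qext _ <| by
    rw [LinearMap.comp_assoc, Submodule.mapQ_mkQ, ← LinearMap.comp_assoc, Submodule.mapQ_mkQ,
      LinearMap.comp_assoc, hgf, LinearMap.id_comp]

end QuotientMaps

namespace Comod

open LinearMap

variable {Bg : Bialgebroid k R A} {Q : Type} [AddCommGroup Q] [Module k Q] (C : Comod Bg Q)

/-- The relations of `Q ⊗_R A`. -/
def tensorRel : Submodule k (Q ⊗[k] A) :=
  Submodule.span k {x | ∃ (r' : R) (p : Q) (c : A),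
    x = (C.qr r' p) ⊗ₜ[k] c - p ⊗ₜ[k] (Bg.src r' * c)}

/-- The relations of `Q ⊗_R A ⊗_R A`. -/
def tensorRel3 : Submodule k (Q ⊗[k] (A ⊗[k] A)) :=
  Submodule.span k
    ({x | ∃ (r : R) (p : Q) (c d : A),
        x = (C.qr r p) ⊗ₜ[k] (c ⊗ₜ[k] d) - p ⊗ₜ[k] ((Bg.src r * c) ⊗ₜ[k] d)} ∪
     {x | ∃ (r : R) (p : Q) (c d : A),
        x = p ⊗ₜ[k] ((Bg.tgt r * c) ⊗ₜ[k] d) - p ⊗ₜ[k] (c ⊗ₜ[k] (Bg.src r * d))})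

/-- `q ⊗ a ↦ q₀ ⊗ φ(q₁) a`. -/
noncomputable def coactMap (φ : A →ₗ[k] A) : Q ⊗[k] A →ₗ[k] Q ⊗[k] A :=
  lTensor Q (mul' k A ∘ₗ rTensor A φ) ∘ₗ (TensorProduct.assoc k Q A A).toLinearMap ∘ₗ
    rTensor A C.coact

theorem coactMap_tmul (φ : A →ₗ[k] A) (q : Q) (a : A) :
    C.coactMap φ (q ⊗ₜ a) = lTensor Q (mulRight k a ∘ₗ φ) (C.coact q) := by
  simp only [coactMap, coe_comp, Function.comp_apply, rTensor_tmul]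
  induction C.coact q using TensorProduct.induction_on with
  | zero => simp
  | tmul p b => simp
  | add x y hx hy => simp only [TensorProduct.add_tmul, map_add, hx, hy]

theorem coactMap_coactMap_tmul (ψ φ : A →ₗ[k] A) (q : Q) (a : A) :
    C.coactMap ψ (C.coactMap φ (q ⊗ₜ a)) =
      lTensor Q (mulRight k a ∘ₗ mul' k A ∘ₗ TensorProduct.map ψ φ)
        (TensorProduct.assoc k Q A A (rTensor A C.coact (C.coact q))) := by
  rw [coactMap_tmul]
  induction C.coact q using TensorProduct.induction_on with
  | zero => simp
  | tmul p b =>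
    rw [lTensor_tmul, coe_comp, Function.comp_apply, mulRight_apply, coactMap_tmul,
      rTensor_tmul]
    induction C.coact p using TensorProduct.induction_on with
    | zero => simp
    | tmul p' c => simp [mul_assoc]
    | add x y hx hy => rw [map_add, TensorProduct.add_tmul, map_add, map_add, hx, hy]
  | add x y hx hy => simp only [map_add, hx, hy]

theorem circRel_mkQ_qr_tmul (r : R) (p : Q) (x : A) :
    (circRel Bg C).mkQ (C.qr r p ⊗ₜ x) = (circRel Bg C).mkQ (p ⊗ₜ (Bg.tgt r * x)) :=
  (Submodule.Quotient.eq _).2 <| Submodule.subset_span ⟨1, r, p, x, by simp⟩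

theorem circRel_mkQ_ql_tmul (r : R) (p : Q) (x : A) :
    (circRel Bg C).mkQ (C.ql r p ⊗ₜ x) = (circRel Bg C).mkQ (p ⊗ₜ (Bg.src r * x)) :=
  (Submodule.Quotient.eq _).2 <| Submodule.subset_span ⟨r, 1, p, x, by simp⟩

theorem targRel_mkQ_qr_tmul (r : R) (p : Q) (x : A) :
    (targRel Bg C).mkQ (C.qr r p ⊗ₜ x) = (targRel Bg C).mkQ (p ⊗ₜ (Bg.src r * x)) :=
  (Submodule.Quotient.eq _).2 <| Submodule.subset_span <| Or.inr ⟨r, p, x, rfl⟩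

theorem targRel_mkQ_ql_tmul (r : R) (p : Q) (x : A) :
    (targRel Bg C).mkQ (C.ql r p ⊗ₜ x) = (targRel Bg C).mkQ (p ⊗ₜ (Bg.src r * x)) := by
  rw [← targRel_mkQ_qr_tmul]
  exact (Submodule.Quotient.eq _).2 <| Submodule.subset_span <| Or.inl ⟨r, p, x, rfl⟩

theorem targRel_mkQ_qr_tmul_mul (r : R) (p : Q) (c x : A) :
    (targRel Bg C).mkQ (C.qr r p ⊗ₜ (c * x)) = (targRel Bg C).mkQ (p ⊗ₜ (Bg.src r * c * x)) := by
  rw [mul_assoc, targRel_mkQ_qr_tmul]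

theorem circRel_mkQ_qr_tmul_antipode {S : A →ₗ[k] A}
    (hS1 : ∀ (a : A) (r : R), S (a * Bg.src r) = Bg.tgt r * S a) (r : R) (p : Q) (c x : A) :
    (circRel Bg C).mkQ (C.qr r p ⊗ₜ (S c * x)) =
      (circRel Bg C).mkQ (p ⊗ₜ (S (Bg.src r * c) * x)) := by
  rw [Bg.src_central, hS1, mul_assoc, circRel_mkQ_qr_tmul]

theorem tensorRel_le_comap {φ : A →ₗ[k] A} {T : Submodule k (Q ⊗[k] A)}
    (hφ : ∀ r p c x, T.mkQ (C.qr r p ⊗ₜ (φ c * x)) = T.mkQ (p ⊗ₜ (φ (Bg.src r * c) * x)))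
    (a : A) : C.tensorRel ≤ T.comap (lTensor Q (mulRight k a ∘ₗ φ)) :=
  Submodule.span_le.2 <| by
    rintro _ ⟨r, p, c, rfl⟩
    exact Submodule.sub_mem_comap_of_mkQ_eq (by simpa using hφ r p c a)

theorem tensorRel3_le_comap {ψ φ : A →ₗ[k] A} {T : Submodule k (Q ⊗[k] A)}
    (hψ : ∀ r p c x, T.mkQ (C.qr r p ⊗ₜ (ψ c * x)) = T.mkQ (p ⊗ₜ (ψ (Bg.src r * c) * x)))
    (hψφ : ∀ r c d, ψ (Bg.tgt r * c) * φ d = ψ c * φ (Bg.src r * d)) (a : A) :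
    C.tensorRel3 ≤ T.comap (lTensor Q (mulRight k a ∘ₗ mul' k A ∘ₗ TensorProduct.map ψ φ)) :=
  Submodule.span_le.2 <| by
    rintro _ (⟨r, p, c, d, rfl⟩ | ⟨r, p, c, d, rfl⟩) <;>
      refine Submodule.sub_mem_comap_of_mkQ_eq ?_
    · simpa [mul_assoc] using hψ r p c (φ d * a)
    · simp [hψφ]

theorem mkQ_coactMap_ql_tmul {φ : A →ₗ[k] A} {T : Submodule k (Q ⊗[k] A)}
    (hφ : ∀ r p c x, T.mkQ (C.qr r p ⊗ₜ (φ c * x)) = T.mkQ (p ⊗ₜ (φ (Bg.src r * c) * x)))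
    {r : R} (hql : ∀ p x, T.mkQ (C.ql r p ⊗ₜ x) = T.mkQ (p ⊗ₜ (Bg.src r * x))) (p : Q) (a : A) :
    T.mkQ (C.coactMap φ (C.ql r p ⊗ₜ a)) = T.mkQ (C.coactMap φ (p ⊗ₜ (Bg.src r * a))) := by
  have hpure : T.mkQ ∘ₗ lTensor Q (mulRight k a ∘ₗ φ) ∘ₗ rTensor A (C.ql r) =
      T.mkQ ∘ₗ lTensor Q (mulRight k (Bg.src r * a) ∘ₗ φ) :=
    TensorProduct.ext' fun p' b => by
      simp [hql, ← mul_assoc, Bg.src_central r (φ b)]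
  rw [coactMap_tmul, coactMap_tmul,
    Submodule.mkQ_apply_eq_of_le_comap (C.tensorRel_le_comap hφ a) (C.coact_left r p)]
  exact LinearMap.congr_fun hpure (C.coact p)

theorem mkQ_coactMap_qr_tmul {φ : A →ₗ[k] A} {T : Submodule k (Q ⊗[k] A)}
    (hφ : ∀ r p c x, T.mkQ (C.qr r p ⊗ₜ (φ c * x)) = T.mkQ (p ⊗ₜ (φ (Bg.src r * c) * x)))
    {r : R} {c : A} (hc : ∀ b, φ (Bg.tgt r * b) = φ b * c) (p : Q) (a : A) :
    T.mkQ (C.coactMap φ (C.qr r p ⊗ₜ a)) = T.mkQ (C.coactMap φ (p ⊗ₜ (c * a))) := by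
  have hpure : lTensor Q (mulRight k a ∘ₗ φ) ∘ₗ lTensor Q (mulLeft k (Bg.tgt r)) =
      lTensor Q (mulRight k (c * a) ∘ₗ φ) :=
    TensorProduct.ext' fun p' b => by simp [hc, mul_assoc]
  rw [coactMap_tmul, coactMap_tmul,
    Submodule.mkQ_apply_eq_of_le_comap (C.tensorRel_le_comap hφ a) (C.coact_right r p)]
  exact congrArg T.mkQ (LinearMap.congr_fun hpure (C.coact p))

theorem mkQ_lTensor_counit {u : R →ₐ[k] A} {T : Submodule k (Q ⊗[k] A)}
    (hu : ∀ r p x, T.mkQ (C.qr r p ⊗ₜ x) = T.mkQ (p ⊗ₜ (u r * x))) (q : Q) (a : A) :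
    T.mkQ (lTensor Q (mulRight k a ∘ₗ u.toLinearMap ∘ₗ Bg.counit.toLinearMap) (C.coact q)) =
      T.mkQ (q ⊗ₜ a) := by
  have hpure : T.mkQ ∘ₗ lTensor Q (mulRight k a ∘ₗ u.toLinearMap ∘ₗ Bg.counit.toLinearMap) =
      T.mkQ ∘ₗ (TensorProduct.mk k Q A).flip a ∘ₗ
        TensorProduct.lift ((C.qr.toLinearMap : R →ₗ[k] Module.End k Q) ∘ₗ
          Bg.counit.toLinearMap).flip :=
    TensorProduct.ext' fun p b => by simp [hu]
  conv_rhs => rw [← C.counital q]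
  exact LinearMap.congr_fun hpure (C.coact q)

theorem mkQ_comp_coactMap_comp_coactMap {ψ φ : A →ₗ[k] A} {u : R →ₐ[k] A}
    {T : Submodule k (Q ⊗[k] A)}
    (hcounit : ∀ b, mul' k A (TensorProduct.map ψ φ (Bg.comul b)) = u (Bg.counit b))
    (hψ : ∀ r p c x, T.mkQ (C.qr r p ⊗ₜ (ψ c * x)) = T.mkQ (p ⊗ₜ (ψ (Bg.src r * c) * x)))
    (hψφ : ∀ r c d, ψ (Bg.tgt r * c) * φ d = ψ c * φ (Bg.src r * d))
    (hu : ∀ r p x, T.mkQ (C.qr r p ⊗ₜ x) = T.mkQ (p ⊗ₜ (u r * x))) :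
    T.mkQ ∘ₗ C.coactMap ψ ∘ₗ C.coactMap φ = T.mkQ :=
  TensorProduct.ext' fun q a => by
    have hcomul : (mulRight k a ∘ₗ mul' k A ∘ₗ TensorProduct.map ψ φ) ∘ₗ Bg.comul =
        mulRight k a ∘ₗ u.toLinearMap ∘ₗ Bg.counit.toLinearMap := by
      ext b
      simp [hcounit]
    calc T.mkQ (C.coactMap ψ (C.coactMap φ (q ⊗ₜ a)))
        = T.mkQ (lTensor Q (mulRight k a ∘ₗ mul' k A ∘ₗ TensorProduct.map ψ φ)
            (TensorProduct.assoc k Q A A (rTensor A C.coact (C.coact q)))) := by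
          rw [coactMap_coactMap_tmul]
      _ = T.mkQ (lTensor Q (mulRight k a ∘ₗ mul' k A ∘ₗ TensorProduct.map ψ φ)
            (lTensor Q Bg.comul (C.coact q))) :=
          Submodule.mkQ_apply_eq_of_le_comap (C.tensorRel3_le_comap hψ hψφ a) (C.coassoc q)
      _ = T.mkQ (lTensor Q (mulRight k a ∘ₗ u.toLinearMap ∘ₗ Bg.counit.toLinearMap)
            (C.coact q)) := by
          rw [← lTensor_comp_apply, hcomul]
      _ = T.mkQ (q ⊗ₜ a) := C.mkQ_lTensor_counit hu q a

theorem circRel_le_comap_coactMap_id :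
    circRel Bg C ≤ (targRel Bg C).comap (C.coactMap LinearMap.id) :=
  Submodule.span_le.2 <| by
    rintro _ ⟨r, r', p, a, rfl⟩
    have hid := C.targRel_mkQ_qr_tmul_mul
    refine Submodule.sub_mem_comap_of_mkQ_eq ?_
    rw [C.mkQ_coactMap_ql_tmul (φ := LinearMap.id) hid (C.targRel_mkQ_ql_tmul r),
      C.mkQ_coactMap_qr_tmul (φ := LinearMap.id) hid (fun b => Bg.tgt_central r' b),
      ← mul_assoc, Bg.tgt_central r' (Bg.src r), mul_assoc]

theorem targRel_le_comap_coactMap {S : A →ₗ[k] A}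
    (hS1 : ∀ (a : A) (r : R), S (a * Bg.src r) = Bg.tgt r * S a)
    (hS2 : ∀ (a : A) (r : R), S (Bg.tgt r * a) = S a * Bg.src r) :
    targRel Bg C ≤ (circRel Bg C).comap (C.coactMap S) :=
  Submodule.span_le.2 <| by
    have hS := C.circRel_mkQ_qr_tmul_antipode hS1
    rintro _ (⟨r, p, a, rfl⟩ | ⟨r, p, a, rfl⟩) <;>
      refine Submodule.sub_mem_comap_of_mkQ_eq ?_
    · rw [C.mkQ_coactMap_ql_tmul hS (C.circRel_mkQ_ql_tmul r),
        C.mkQ_coactMap_qr_tmul hS (fun b => hS2 b r)]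
    · exact C.mkQ_coactMap_qr_tmul hS (fun b => hS2 b r) p a

end Comod

/-- For a Hopf algebroid (bialgebroid with antipode `S`) and any right comodule `Q`,
the canonical map `ς_Q : Q ∘ A → (Q/[Q,R]) ⊗_R A`, `q ∘ a ↦ [q₀] ⊗ q₁ a`, is an
isomorphism, with inverse `[q] ⊗ a ↦ q₀ ∘ S(q₁) a`. -/
theorem stmt9 (Bg : Bialgebroid k R A) (S : A →ₗ[k] A)
    (hS1 : ∀ (a : A) (r : R), S (a * Bg.src r) = Bg.tgt r * S a)
    (hS2 : ∀ (a : A) (r : R), S (Bg.tgt r * a) = S a * Bg.src r)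
    (hS3 : ∀ a : A,
      LinearMap.mul' k A ((LinearMap.lTensor A S) (Bg.comul a)) = Bg.src (Bg.counit a))
    (hS4 : ∀ a : A,
      LinearMap.mul' k A ((LinearMap.rTensor A S) (Bg.comul a)) = Bg.tgt (Bg.counit a))
    (Q : Type) [AddCommGroup Q] [Module k Q] (C : Comod Bg Q) :
    ∃ σ : (TensorProduct k Q A ⧸ circRel Bg C) ≃ₗ[k]
          (TensorProduct k Q A ⧸ targRel Bg C),
      (∀ (q : Q) (a : A),
        σ (Submodule.Quotient.mk (q ⊗ₜ[k] a)) =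
          Submodule.Quotient.mk
            ((LinearMap.lTensor Q (LinearMap.mulRight k a)) (C.coact q))) ∧
      (∀ (q : Q) (a : A),
        σ.symm (Submodule.Quotient.mk (q ⊗ₜ[k] a)) =
          Submodule.Quotient.mk
            ((LinearMap.lTensor Q ((LinearMap.mulRight k a) ∘ₗ S)) (C.coact q))) := by
  have hf := C.circRel_le_comap_coactMap_id
  have hg := C.targRel_le_comap_coactMap hS1 hS2
  have hgf : (circRel Bg C).mkQ ∘ₗ C.coactMap S ∘ₗ C.coactMap LinearMap.id =
      (circRel Bg C).mkQ :=
    C.mkQ_comp_coactMap_comp_coactMap hS4 (C.circRel_mkQ_qr_tmul_antipode hS1)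
      (fun r c d => by simp [hS2, mul_assoc]) C.circRel_mkQ_qr_tmul
  have hfg : (targRel Bg C).mkQ ∘ₗ C.coactMap LinearMap.id ∘ₗ C.coactMap S =
      (targRel Bg C).mkQ :=
    C.mkQ_comp_coactMap_comp_coactMap hS3 C.targRel_mkQ_qr_tmul_mul
      (fun r c d => by rw [Bg.src_central, hS1, Bg.tgt_central, LinearMap.id_apply,
        LinearMap.id_apply, mul_assoc]) C.targRel_mkQ_qr_tmul
  refine ⟨LinearEquiv.ofLinearMap _ _ (Submodule.mapQ_comp_mapQ_eq_id hg hf hfg)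
    (Submodule.mapQ_comp_mapQ_eq_id hf hg hgf), fun q a => ?_, fun q a => ?_⟩ <;>
  simp [Comod.coactMap_tmul]

end Stmt9
end

section
/- Let k be a commutative ring, R a commutative k-algebra, and A an R-bialgebroid whose source and target maps land in the center of A. Suppose the canonical map A ⋆ A → A ⊗_R A, a ⋆ b ↦ a₁ ⊗ a₂ b, is bijective, where A ⋆ A = A ⊗_k A / ⟨a·r ⊗ b − a ⊗ b·r⟩; write its inverse on a ⊗ 1 as a⁺ ⋆ a⁻. Then S(a) := t(ε(a⁺)) a⁻ defines an antipode for A: S(a s(r)) = t(r) S(a), S(t(r) a) = S(a) s(r), a₁ S(a₂) = s(ε(a)), and S(a₁) a₂ = t(ε(a)) for all a ∈ A, r ∈ R. Hence A is a Hopf algebroid. -/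
open TensorProduct

section Bialgebroid

variable (k R A : Type) [CommRing k] [CommRing R] [Algebra k R]
  [Ring A] [Algebra k A]

section Stmt10

variable {k R A : Type} [CommRing k] [CommRing R] [Algebra k R]
  [Ring A] [Algebra k A]

/-- The relations of `A ⋆ A = A ⊗_k A / ⟨a·r ⊗ b − a ⊗ b·r⟩`
(where `a·r = tgt r * a`). -/
def starRel (Bg : Bialgebroid k R A) : Submodule k (TensorProduct k A A) :=
  Submodule.span k {x | ∃ (r : R) (a b : A),
    x = (Bg.tgt r * a) ⊗ₜ[k] b - a ⊗ₜ[k] (Bg.tgt r * b)}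

/-!
Write `m : A ⋆ A → A`, `a ⋆ b ↦ t(ε a) b`, and `S̃ := m ∘ γ⁻¹ : A ⊗_R A → A`, so that
`S a = S̃ (a ⊗ 1)`. The Galois map `γ` commutes with left multiplication by `s r ⊗ 1` and
right multiplication by `1 ⊗ c`, hence so does `γ⁻¹`. This gives `S̃ (a ⊗ b) = S(a) b`, the
two `R`-linearity properties of `S`, and `S(a₁) a₂ = S̃ (Δ a) = S̃ (γ (a ⋆ 1)) = t(ε a)`.

For `a₁ S(a₂)` consider `Φ : A ⊗_R A ⊗_R A → A`, `x ⊗ y ⊗ z ↦ x S̃ (y ⊗ z)`. By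
coassociativity `(Δ ⊗ id) (γ (u ⋆ v)) = u₁ ⊗ γ (u₂ ⋆ v)`, so `Φ ((Δ ⊗ id) (γ (u ⋆ v))) =
u₁ t(ε u₂) v = u v`. Taking `u ⋆ v = γ⁻¹ (a ⊗ 1)` gives
`a₁ S(a₂) = Φ (a₁ ⊗ a₂ ⊗ 1) = u v = s(ε u₁) u₂ v = s(ε a)`.
-/

lemma TensorProduct.assoc_rTensor_mul_one_tmul (f : A →ₗ[k] A ⊗[k] A) (w : A ⊗[k] A) (v : A) :
    TensorProduct.assoc k A A A (f.rTensor A (w * (1 ⊗ₜ v))) =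
      TensorProduct.assoc k A A A (f.rTensor A w) * (1 ⊗ₜ (1 ⊗ₜ v)) := by
  induction w using TensorProduct.induction_on with
  | zero => simp
  | add w₁ w₂ h₁ h₂ => simp only [add_mul, map_add, h₁, h₂]
  | tmul p q =>
    rw [Algebra.TensorProduct.tmul_mul_tmul, mul_one, LinearMap.rTensor_tmul,
      LinearMap.rTensor_tmul]
    induction f p using TensorProduct.induction_on with
    | zero => simp
    | add x₁ x₂ h₁ h₂ => simp only [add_tmul, map_add, add_mul, h₁, h₂]
    | tmul x y => simp [Algebra.TensorProduct.tmul_mul_tmul]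

namespace Bialgebroid

variable (Bg : Bialgebroid k R A)

-- `A ⊗_R A`, `A ⋆ A` and `A ⊗_R A ⊗_R A`
abbrev RTensor : Type := A ⊗[k] A ⧸ corel k R A Bg.src Bg.tgt
abbrev Star : Type := A ⊗[k] A ⧸ starRel Bg
abbrev RTensor₃ : Type := A ⊗[k] (A ⊗[k] A) ⧸ corel3 k R A Bg.src Bg.tgt

lemma src_mul_tgt_mul (r r' : R) (a : A) :
    Bg.src r * (Bg.tgt r' * a) = Bg.tgt r' * (Bg.src r * a) := by
  rw [← mul_assoc, ← mul_assoc, Bg.tgt_central]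

lemma counit_tgt (r : R) : Bg.counit (Bg.tgt r) = r := by
  simpa using Bg.counit_right r 1

lemma sub_mem_corel (r : R) (b c : A) :
    (Bg.tgt r * b) ⊗ₜ[k] c - b ⊗ₜ[k] (Bg.src r * c) ∈ corel k R A Bg.src Bg.tgt :=
  Submodule.subset_span ⟨r, b, c, rfl⟩

lemma sub_mem_starRel (r : R) (a b : A) :
    (Bg.tgt r * a) ⊗ₜ[k] b - a ⊗ₜ[k] (Bg.tgt r * b) ∈ starRel Bg :=
  Submodule.subset_span ⟨r, a, b, rfl⟩

lemma sub_mem_corel3_left (r : R) (b c d : A) :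
    (Bg.tgt r * b) ⊗ₜ[k] (c ⊗ₜ[k] d) - b ⊗ₜ[k] ((Bg.src r * c) ⊗ₜ[k] d)
      ∈ corel3 k R A Bg.src Bg.tgt :=
  Submodule.subset_span (Or.inl ⟨r, b, c, d, rfl⟩)

lemma sub_mem_corel3_right (r : R) (b c d : A) :
    b ⊗ₜ[k] ((Bg.tgt r * c) ⊗ₜ[k] d) - b ⊗ₜ[k] (c ⊗ₜ[k] (Bg.src r * d))
      ∈ corel3 k R A Bg.src Bg.tgt :=
  Submodule.subset_span (Or.inr ⟨r, b, c, d, rfl⟩)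

lemma mk_tgt_mul_tmul (r : R) (b c : A) :
    (Submodule.Quotient.mk ((Bg.tgt r * b) ⊗ₜ[k] c) : Bg.RTensor) =
      Submodule.Quotient.mk (b ⊗ₜ[k] (Bg.src r * c)) :=
  (Submodule.Quotient.eq _).2 (Bg.sub_mem_corel r b c)

def mulRightRTensor (c : A) : Bg.RTensor →ₗ[k] Bg.RTensor :=
  Submodule.mapQ _ _ (LinearMap.mulRight k ((1 : A) ⊗ₜ[k] c)) <| Submodule.span_le.2 <| by
    rintro _ ⟨r, a, b, rfl⟩
    simpa [sub_mul, Algebra.TensorProduct.tmul_mul_tmul, mul_assoc] using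
      Bg.sub_mem_corel r a (b * c)

@[simp] lemma mulRightRTensor_mk (c : A) (x : A ⊗[k] A) :
    Bg.mulRightRTensor c (Submodule.Quotient.mk x) = Submodule.Quotient.mk (x * (1 ⊗ₜ c)) :=
  rfl

def srcMulRTensor (r : R) : Bg.RTensor →ₗ[k] Bg.RTensor :=
  Submodule.mapQ _ _ (LinearMap.mulLeft k (Bg.src r ⊗ₜ[k] (1 : A))) <| Submodule.span_le.2 <| by
    rintro _ ⟨r', a, b, rfl⟩
    simpa [mul_sub, Algebra.TensorProduct.tmul_mul_tmul, src_mul_tgt_mul] using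
      Bg.sub_mem_corel r' (Bg.src r * a) b

@[simp] lemma srcMulRTensor_mk (r : R) (x : A ⊗[k] A) :
    Bg.srcMulRTensor r (Submodule.Quotient.mk x) =
      Submodule.Quotient.mk ((Bg.src r ⊗ₜ 1) * x) :=
  rfl

def mulRightStar (c : A) : Bg.Star →ₗ[k] Bg.Star :=
  Submodule.mapQ _ _ (LinearMap.mulRight k ((1 : A) ⊗ₜ[k] c)) <| Submodule.span_le.2 <| by
    rintro _ ⟨r, a, b, rfl⟩
    simpa [sub_mul, Algebra.TensorProduct.tmul_mul_tmul, mul_assoc] using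
      Bg.sub_mem_starRel r a (b * c)

@[simp] lemma mulRightStar_mk (c : A) (x : A ⊗[k] A) :
    Bg.mulRightStar c (Submodule.Quotient.mk x) = Submodule.Quotient.mk (x * (1 ⊗ₜ c)) :=
  rfl

def srcMulStar (r : R) : Bg.Star →ₗ[k] Bg.Star :=
  Submodule.mapQ _ _ (LinearMap.mulLeft k (Bg.src r ⊗ₜ[k] (1 : A))) <| Submodule.span_le.2 <| by
    rintro _ ⟨r', a, b, rfl⟩
    simpa [mul_sub, Algebra.TensorProduct.tmul_mul_tmul, src_mul_tgt_mul] using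
      Bg.sub_mem_starRel r' (Bg.src r * a) b

@[simp] lemma srcMulStar_mk (r : R) (x : A ⊗[k] A) :
    Bg.srcMulStar r (Submodule.Quotient.mk x) = Submodule.Quotient.mk ((Bg.src r ⊗ₜ 1) * x) :=
  rfl

def mulRightRTensor₃ (v : A) : Bg.RTensor₃ →ₗ[k] Bg.RTensor₃ :=
  Submodule.mapQ _ _ (LinearMap.mulRight k ((1 : A) ⊗ₜ[k] ((1 : A) ⊗ₜ[k] v))) <|
    Submodule.span_le.2 <| by
      rintro _ (⟨r, b, c, d, rfl⟩ | ⟨r, b, c, d, rfl⟩)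
      · simpa [sub_mul, Algebra.TensorProduct.tmul_mul_tmul, mul_assoc] using
          Bg.sub_mem_corel3_left r b c (d * v)
      · simpa [sub_mul, Algebra.TensorProduct.tmul_mul_tmul, mul_assoc] using
          Bg.sub_mem_corel3_right r b c (d * v)

@[simp] lemma mulRightRTensor₃_mk (v : A) (x : A ⊗[k] (A ⊗[k] A)) :
    Bg.mulRightRTensor₃ v (Submodule.Quotient.mk x) =
      Submodule.Quotient.mk (x * (1 ⊗ₜ (1 ⊗ₜ v))) :=
  rfl

def canTensor : A ⊗[k] A →ₗ[k] A ⊗[k] A :=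
  TensorProduct.lift
    ((LinearMap.mul k (A ⊗[k] A) ∘ₗ Bg.comul).compl₂ (TensorProduct.mk k A A 1))

@[simp] lemma canTensor_tmul (a b : A) : Bg.canTensor (a ⊗ₜ b) = Bg.comul a * (1 ⊗ₜ b) := by
  simp [canTensor]

def can : Bg.Star →ₗ[k] Bg.RTensor :=
  Submodule.liftQ _ ((corel k R A Bg.src Bg.tgt).mkQ ∘ₗ Bg.canTensor) <|
    Submodule.span_le.2 <| by
      rintro _ ⟨r, a, b, rfl⟩
      have h := congrArg (Bg.mulRightRTensor b) (Bg.comul_tgt r a)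
      simp only [mulRightRTensor_mk, mul_assoc, Algebra.TensorProduct.tmul_mul_tmul,
        one_mul] at h
      simp [h]

@[simp] lemma can_mk (x : A ⊗[k] A) :
    Bg.can (Submodule.Quotient.mk x) = Submodule.Quotient.mk (Bg.canTensor x) :=
  rfl

lemma can_mulRightStar (c : A) (z : Bg.Star) :
    Bg.can (Bg.mulRightStar c z) = Bg.mulRightRTensor c (Bg.can z) := by
  refine LinearMap.congr_fun (f := Bg.can ∘ₗ Bg.mulRightStar c)
    (g := Bg.mulRightRTensor c ∘ₗ Bg.can) ?_ z
  ext a b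
  simp [mul_assoc, Algebra.TensorProduct.tmul_mul_tmul]

lemma can_srcMulStar (r : R) (z : Bg.Star) :
    Bg.can (Bg.srcMulStar r z) = Bg.srcMulRTensor r (Bg.can z) := by
  refine LinearMap.congr_fun (f := Bg.can ∘ₗ Bg.srcMulStar r)
    (g := Bg.srcMulRTensor r ∘ₗ Bg.can) ?_ z
  ext a b
  have h := congrArg (Bg.mulRightRTensor b) (Bg.comul_src r a)
  simp only [mulRightRTensor_mk] at h
  simp [Algebra.TensorProduct.tmul_mul_tmul, h, mul_assoc]

def tgtCounitMul : A ⊗[k] A →ₗ[k] A :=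
  TensorProduct.lift (LinearMap.mul k A ∘ₗ Bg.tgt.toLinearMap ∘ₗ Bg.counit.toLinearMap)

@[simp] lemma tgtCounitMul_tmul (a b : A) :
    Bg.tgtCounitMul (a ⊗ₜ b) = Bg.tgt (Bg.counit a) * b := by
  simp [tgtCounitMul]

def mulTgtCounit : A ⊗[k] A →ₗ[k] A :=
  TensorProduct.lift ((LinearMap.mul k A ∘ₗ (Bg.tgt.toLinearMap ∘ₗ Bg.counit.toLinearMap)).flip)

@[simp] lemma mulTgtCounit_tmul (a b : A) :
    Bg.mulTgtCounit (a ⊗ₜ b) = Bg.tgt (Bg.counit b) * a := by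
  simp [mulTgtCounit]

def srcCounitMul : A ⊗[k] A →ₗ[k] A :=
  TensorProduct.lift (LinearMap.mul k A ∘ₗ (Bg.src.toLinearMap ∘ₗ Bg.counit.toLinearMap))

@[simp] lemma srcCounitMul_tmul (a b : A) :
    Bg.srcCounitMul (a ⊗ₜ b) = Bg.src (Bg.counit a) * b := by
  simp [srcCounitMul]

/-- The map `m` of the header. -/
def starCounit : Bg.Star →ₗ[k] A :=
  Submodule.liftQ _ Bg.tgtCounitMul <| Submodule.span_le.2 <| by
    rintro _ ⟨r, a, b, rfl⟩
    simp only [SetLike.mem_coe, LinearMap.mem_ker, map_sub, tgtCounitMul_tmul, map_mul,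
      counit_tgt, sub_eq_zero]
    rw [← mul_assoc, Bg.tgt_central r, mul_assoc]

@[simp] lemma starCounit_mk (x : A ⊗[k] A) :
    Bg.starCounit (Submodule.Quotient.mk x) = Bg.tgtCounitMul x :=
  rfl

def srcCounit : Bg.RTensor →ₗ[k] A :=
  Submodule.liftQ _ Bg.srcCounitMul <| Submodule.span_le.2 <| by
    rintro _ ⟨r, b, c, rfl⟩
    simp only [SetLike.mem_coe, LinearMap.mem_ker, map_sub, srcCounitMul_tmul, map_mul,
      counit_tgt, sub_eq_zero]
    rw [← mul_assoc, Bg.src_central r]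

@[simp] lemma srcCounit_mk (x : A ⊗[k] A) :
    Bg.srcCounit (Submodule.Quotient.mk x) = Bg.srcCounitMul x :=
  rfl

def starMul : Bg.Star →ₗ[k] A :=
  Submodule.liftQ _ (LinearMap.mul' k A) <| Submodule.span_le.2 <| by
    rintro _ ⟨r, a, b, rfl⟩
    simp only [SetLike.mem_coe, LinearMap.mem_ker, map_sub, LinearMap.mul'_apply, sub_eq_zero]
    rw [← mul_assoc, Bg.tgt_central r]

@[simp] lemma starMul_mk (x : A ⊗[k] A) :
    Bg.starMul (Submodule.Quotient.mk x) = LinearMap.mul' k A x :=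
  rfl

lemma starCounit_mulRightStar (c : A) (z : Bg.Star) :
    Bg.starCounit (Bg.mulRightStar c z) = Bg.starCounit z * c := by
  refine LinearMap.congr_fun (f := Bg.starCounit ∘ₗ Bg.mulRightStar c)
    (g := LinearMap.mulRight k c ∘ₗ Bg.starCounit) ?_ z
  ext a b
  simp [Algebra.TensorProduct.tmul_mul_tmul, mul_assoc]

lemma starCounit_srcMulStar (r : R) (z : Bg.Star) :
    Bg.starCounit (Bg.srcMulStar r z) = Bg.tgt r * Bg.starCounit z := by
  refine LinearMap.congr_fun (f := Bg.starCounit ∘ₗ Bg.srcMulStar r)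
    (g := LinearMap.mulLeft k (Bg.tgt r) ∘ₗ Bg.starCounit) ?_ z
  ext a b
  simp [Algebra.TensorProduct.tmul_mul_tmul, Bg.counit_left, mul_assoc]

lemma srcCounitMul_mul_one_tmul (w : A ⊗[k] A) (v : A) :
    Bg.srcCounitMul (w * (1 ⊗ₜ v)) = Bg.srcCounitMul w * v := by
  induction w using TensorProduct.induction_on with
  | zero => simp
  | add w₁ w₂ h₁ h₂ => simp only [add_mul, map_add, h₁, h₂]
  | tmul p q => simp [Algebra.TensorProduct.tmul_mul_tmul, mul_assoc]

lemma starMul_eq_srcCounit_can (z : Bg.Star) : Bg.starMul z = Bg.srcCounit (Bg.can z) := by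
  refine LinearMap.congr_fun (f := Bg.starMul) (g := Bg.srcCounit ∘ₗ Bg.can)
    (Submodule.linearMap_qext _ (TensorProduct.ext' fun u v => ?_)) z
  simp only [LinearMap.comp_apply, Submodule.mkQ_apply, starMul_mk, LinearMap.mul'_apply,
    can_mk, canTensor_tmul, srcCounit_mk, srcCounitMul_mul_one_tmul]
  rw [show Bg.srcCounitMul (Bg.comul u) = u from Bg.comul_counit_left u]

lemma assoc_tmul_mem_corel3 {x : A ⊗[k] A} (hx : x ∈ corel k R A Bg.src Bg.tgt) (c : A) :
    TensorProduct.assoc k A A A (x ⊗ₜ c) ∈ corel3 k R A Bg.src Bg.tgt := by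
  refine (Submodule.span_le (p := (corel3 k R A Bg.src Bg.tgt).comap
    ((TensorProduct.assoc k A A A).toLinearMap ∘ₗ (TensorProduct.mk k (A ⊗[k] A) A).flip c))).2
    ?_ hx
  rintro _ ⟨r, b, d, rfl⟩
  simpa using Bg.sub_mem_corel3_left r b d c

lemma assoc_mul_tgt_tmul_sub_mem_corel3 (r : R) (w : A ⊗[k] A) (c : A) :
    TensorProduct.assoc k A A A ((w * (1 ⊗ₜ Bg.tgt r)) ⊗ₜ c) -
      TensorProduct.assoc k A A A (w ⊗ₜ (Bg.src r * c)) ∈ corel3 k R A Bg.src Bg.tgt := by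
  induction w using TensorProduct.induction_on with
  | zero => simp
  | add w₁ w₂ h₁ h₂ =>
    rw [add_mul, add_tmul, add_tmul, map_add, map_add, add_sub_add_comm]
    exact add_mem h₁ h₂
  | tmul p q =>
    rw [Algebra.TensorProduct.tmul_mul_tmul, mul_one, TensorProduct.assoc_tmul,
      TensorProduct.assoc_tmul, ← Bg.tgt_central]
    exact Bg.sub_mem_corel3_right r p q c

def comulRTensor : Bg.RTensor →ₗ[k] Bg.RTensor₃ :=
  Submodule.mapQ _ _ ((TensorProduct.assoc k A A A).toLinearMap ∘ₗ Bg.comul.rTensor A) <|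
    Submodule.span_le.2 <| by
      rintro _ ⟨r, b, c, rfl⟩
      have hΔ : Bg.comul (Bg.tgt r * b) - Bg.comul b * (1 ⊗ₜ Bg.tgt r) ∈
          corel k R A Bg.src Bg.tgt :=
        (Submodule.Quotient.eq _).1 (Bg.comul_tgt r b)
      have h := add_mem (Bg.assoc_tmul_mem_corel3 hΔ c)
        (Bg.assoc_mul_tgt_tmul_sub_mem_corel3 r (Bg.comul b) c)
      rw [sub_tmul, map_sub, sub_add_sub_cancel] at h
      simpa using h

@[simp] lemma comulRTensor_mk (x : A ⊗[k] A) :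
    Bg.comulRTensor (Submodule.Quotient.mk x) =
      Submodule.Quotient.mk (TensorProduct.assoc k A A A (Bg.comul.rTensor A x)) :=
  rfl

lemma lTensor_canTensor_assoc (w : A ⊗[k] A) (v : A) :
    Bg.canTensor.lTensor A (TensorProduct.assoc k A A A (w ⊗ₜ v)) =
      Bg.comul.lTensor A w * (1 ⊗ₜ (1 ⊗ₜ v)) := by
  induction w using TensorProduct.induction_on with
  | zero => simp
  | add w₁ w₂ h₁ h₂ => simp only [add_tmul, map_add, add_mul, h₁, h₂]
  | tmul p q => simp [Algebra.TensorProduct.tmul_mul_tmul]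

lemma comulRTensor_can_mk (u v : A) :
    Bg.comulRTensor (Bg.can (Submodule.Quotient.mk (u ⊗ₜ v))) =
      Submodule.Quotient.mk
        (Bg.canTensor.lTensor A (TensorProduct.assoc k A A A (Bg.comul u ⊗ₜ v))) := by
  rw [can_mk, canTensor_tmul, comulRTensor_mk, TensorProduct.assoc_rTensor_mul_one_tmul,
    ← mulRightRTensor₃_mk, Bg.coassoc, mulRightRTensor₃_mk, lTensor_canTensor_assoc]

lemma mul'_lTensor_tgtCounitMul_assoc (w : A ⊗[k] A) (v : A) :
    LinearMap.mul' k A (Bg.tgtCounitMul.lTensor A (TensorProduct.assoc k A A A (w ⊗ₜ v))) =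
      Bg.mulTgtCounit w * v := by
  induction w using TensorProduct.induction_on with
  | zero => simp
  | add w₁ w₂ h₁ h₂ => simp only [add_tmul, map_add, add_mul, h₁, h₂]
  | tmul p q =>
    rw [TensorProduct.assoc_tmul, LinearMap.lTensor_tmul, LinearMap.mul'_apply,
      tgtCounitMul_tmul, mulTgtCounit_tmul, ← mul_assoc, Bg.tgt_central]

section Antipode

variable {Bg} (hbij : Function.Bijective Bg.can)

/-- The map `S̃ = m ∘ γ⁻¹` of the header; it sends `a ⊗ b` to `S(a) b`. -/
noncomputable def antipodeMul : Bg.RTensor →ₗ[k] A :=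
  Bg.starCounit ∘ₗ (LinearEquiv.ofBijective Bg.can hbij).symm.toLinearMap

noncomputable def antipode : A →ₗ[k] A :=
  antipodeMul hbij ∘ₗ (corel k R A Bg.src Bg.tgt).mkQ ∘ₗ (TensorProduct.mk k A A).flip 1

lemma antipode_apply (a : A) :
    antipode hbij a = antipodeMul hbij (Submodule.Quotient.mk (a ⊗ₜ 1)) :=
  rfl

lemma antipodeMul_can (z : Bg.Star) : antipodeMul hbij (Bg.can z) = Bg.starCounit z := by
  rw [antipodeMul, LinearMap.comp_apply, LinearEquiv.coe_coe,
    LinearEquiv.ofBijective_symm_apply_apply]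

lemma antipodeMul_srcMulRTensor (r : R) (ζ : Bg.RTensor) :
    antipodeMul hbij (Bg.srcMulRTensor r ζ) = Bg.tgt r * antipodeMul hbij ζ := by
  obtain ⟨z, rfl⟩ := hbij.2 ζ
  rw [← can_srcMulStar, antipodeMul_can, antipodeMul_can, starCounit_srcMulStar]

lemma antipodeMul_mulRightRTensor (c : A) (ζ : Bg.RTensor) :
    antipodeMul hbij (Bg.mulRightRTensor c ζ) = antipodeMul hbij ζ * c := by
  obtain ⟨z, rfl⟩ := hbij.2 ζ
  rw [← can_mulRightStar, antipodeMul_can, antipodeMul_can, starCounit_mulRightStar]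

lemma antipodeMul_mk_tmul (a b : A) :
    antipodeMul hbij (Submodule.Quotient.mk (a ⊗ₜ b)) = antipode hbij a * b := by
  rw [antipode_apply, ← antipodeMul_mulRightRTensor, mulRightRTensor_mk,
    Algebra.TensorProduct.tmul_mul_tmul, mul_one, one_mul]

lemma antipode_mul_src (a : A) (r : R) :
    antipode hbij (a * Bg.src r) = Bg.tgt r * antipode hbij a := by
  rw [antipode_apply, antipode_apply, ← antipodeMul_srcMulRTensor, srcMulRTensor_mk,
    Algebra.TensorProduct.tmul_mul_tmul, one_mul, Bg.src_central]

lemma antipode_tgt_mul (a : A) (r : R) :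
    antipode hbij (Bg.tgt r * a) = antipode hbij a * Bg.src r := by
  rw [antipode_apply, mk_tgt_mul_tmul, mul_one, antipodeMul_mk_tmul]

lemma mul'_rTensor_antipode_comul (a : A) :
    LinearMap.mul' k A (LinearMap.rTensor A (antipode hbij) (Bg.comul a)) =
      Bg.tgt (Bg.counit a) := by
  have h : LinearMap.mul' k A ∘ₗ LinearMap.rTensor A (antipode hbij) =
      antipodeMul hbij ∘ₗ (corel k R A Bg.src Bg.tgt).mkQ := by
    ext a b
    simp [antipodeMul_mk_tmul]
  have hcomul : (Submodule.Quotient.mk (Bg.comul a) : Bg.RTensor) =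
      Bg.can (Submodule.Quotient.mk (a ⊗ₜ 1)) := by
    rw [can_mk, canTensor_tmul, ← Algebra.TensorProduct.one_def, mul_one]
  rw [← LinearMap.comp_apply, h, LinearMap.comp_apply, Submodule.mkQ_apply, hcomul,
    antipodeMul_can, starCounit_mk, tgtCounitMul_tmul, mul_one]

/-- The map `Φ` of the header. -/
noncomputable def lTensorAntipodeMul : Bg.RTensor₃ →ₗ[k] A :=
  Submodule.liftQ _
    (LinearMap.mul' k A ∘ₗ (antipodeMul hbij ∘ₗ (corel k R A Bg.src Bg.tgt).mkQ).lTensor A) <|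
    Submodule.span_le.2 <| by
      rintro _ (⟨r, b, c, d, rfl⟩ | ⟨r, b, c, d, rfl⟩)
      · have h : (Submodule.Quotient.mk ((Bg.src r * c) ⊗ₜ d) : Bg.RTensor) =
            Bg.srcMulRTensor r (Submodule.Quotient.mk (c ⊗ₜ d)) := by
          rw [srcMulRTensor_mk, Algebra.TensorProduct.tmul_mul_tmul, one_mul]
        simp only [SetLike.mem_coe, LinearMap.mem_ker, map_sub, LinearMap.comp_apply,
          LinearMap.lTensor_tmul, Submodule.mkQ_apply, LinearMap.mul'_apply, sub_eq_zero]
        rw [h, antipodeMul_srcMulRTensor, ← mul_assoc, Bg.tgt_central r b]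
      · simp [mk_tgt_mul_tmul]

@[simp] lemma lTensorAntipodeMul_mk_tmul (x : A) (w : A ⊗[k] A) :
    lTensorAntipodeMul hbij (Submodule.Quotient.mk (x ⊗ₜ w)) =
      x * antipodeMul hbij (Submodule.Quotient.mk w) :=
  rfl

lemma lTensorAntipodeMul_mk_lTensor_canTensor (X : A ⊗[k] (A ⊗[k] A)) :
    lTensorAntipodeMul hbij (Submodule.Quotient.mk (Bg.canTensor.lTensor A X)) =
      LinearMap.mul' k A (Bg.tgtCounitMul.lTensor A X) := by
  refine LinearMap.congr_fun
    (f := lTensorAntipodeMul hbij ∘ₗ (corel3 k R A Bg.src Bg.tgt).mkQ ∘ₗ Bg.canTensor.lTensor A)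
    (g := LinearMap.mul' k A ∘ₗ Bg.tgtCounitMul.lTensor A) (TensorProduct.ext' fun x w => ?_) X
  simp [← can_mk, antipodeMul_can]

lemma lTensorAntipodeMul_comulRTensor_can (z : Bg.Star) :
    lTensorAntipodeMul hbij (Bg.comulRTensor (Bg.can z)) = Bg.starMul z := by
  refine LinearMap.congr_fun (f := lTensorAntipodeMul hbij ∘ₗ Bg.comulRTensor ∘ₗ Bg.can)
    (g := Bg.starMul) (Submodule.linearMap_qext _ (TensorProduct.ext' fun u v => ?_)) z
  simp only [LinearMap.comp_apply, Submodule.mkQ_apply, comulRTensor_can_mk,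
    lTensorAntipodeMul_mk_lTensor_canTensor, mul'_lTensor_tgtCounitMul_assoc, starMul_mk,
    LinearMap.mul'_apply]
  rw [show Bg.mulTgtCounit (Bg.comul u) = u from Bg.comul_counit_right u]

lemma mul'_lTensor_antipode (w : A ⊗[k] A) :
    LinearMap.mul' k A ((antipode hbij).lTensor A w) =
      lTensorAntipodeMul hbij (Submodule.Quotient.mk (TensorProduct.assoc k A A A (w ⊗ₜ 1))) := by
  refine LinearMap.congr_fun (f := LinearMap.mul' k A ∘ₗ (antipode hbij).lTensor A)
    (g := lTensorAntipodeMul hbij ∘ₗ (corel3 k R A Bg.src Bg.tgt).mkQ ∘ₗ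
      (TensorProduct.assoc k A A A).toLinearMap ∘ₗ (TensorProduct.mk k (A ⊗[k] A) A).flip 1)
    (TensorProduct.ext' fun x y => ?_) w
  simp [antipode_apply]

lemma mul'_lTensor_antipode_comul (a : A) :
    LinearMap.mul' k A (LinearMap.lTensor A (antipode hbij) (Bg.comul a)) =
      Bg.src (Bg.counit a) := by
  obtain ⟨z, hz⟩ := hbij.2 (Submodule.Quotient.mk (a ⊗ₜ 1))
  calc LinearMap.mul' k A (LinearMap.lTensor A (antipode hbij) (Bg.comul a))
      = lTensorAntipodeMul hbij (Bg.comulRTensor (Bg.can z)) := by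
        rw [mul'_lTensor_antipode, hz, comulRTensor_mk, LinearMap.rTensor_tmul]
    _ = Bg.srcCounit (Bg.can z) := by
        rw [lTensorAntipodeMul_comulRTensor_can, starMul_eq_srcCounit_can]
    _ = Bg.src (Bg.counit a) := by
        rw [hz, srcCounit_mk, srcCounitMul_tmul, mul_one]

end Antipode

end Bialgebroid

/-- If the canonical (Galois) map `A ⋆ A → A ⊗_R A`, `a ⋆ b ↦ a₁ ⊗ a₂ b`, is
bijective, then writing its inverse on `a ⊗ 1` as `a⁺ ⋆ a⁻`, the map
`S(a) := t(ε(a⁺)) a⁻` is an antipode for `A`; hence `A` is a Hopf algebroid. -/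
theorem stmt10 (Bg : Bialgebroid k R A)
    (γ : (TensorProduct k A A ⧸ starRel Bg) →ₗ[k]
         (TensorProduct k A A ⧸ corel k R A Bg.src Bg.tgt))
    (hγ : ∀ a b : A,
      γ (Submodule.Quotient.mk (a ⊗ₜ[k] b)) =
        Submodule.Quotient.mk (Bg.comul a * ((1:A) ⊗ₜ[k] b)))
    (hbij : Function.Bijective γ)
    (γinv : (TensorProduct k A A ⧸ corel k R A Bg.src Bg.tgt) →
            (TensorProduct k A A ⧸ starRel Bg))
    (hinv : ∀ y, γ (γinv y) = y) :
    ∃ (m : (TensorProduct k A A ⧸ starRel Bg) →ₗ[k] A) (S : A →ₗ[k] A),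
      (∀ a b : A,
        m (Submodule.Quotient.mk (a ⊗ₜ[k] b)) = Bg.tgt (Bg.counit a) * b) ∧
      (∀ a : A, S a = m (γinv (Submodule.Quotient.mk (a ⊗ₜ[k] (1:A))))) ∧
      (∀ (a : A) (r : R), S (a * Bg.src r) = Bg.tgt r * S a) ∧
      (∀ (a : A) (r : R), S (Bg.tgt r * a) = S a * Bg.src r) ∧
      (∀ a : A,
        LinearMap.mul' k A ((LinearMap.lTensor A S) (Bg.comul a)) =
          Bg.src (Bg.counit a)) ∧
      (∀ a : A,
        LinearMap.mul' k A ((LinearMap.rTensor A S) (Bg.comul a)) =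
          Bg.tgt (Bg.counit a)) := by
  have hcan : γ = Bg.can :=
    Submodule.linearMap_qext _ (TensorProduct.ext' fun a b => by simpa using hγ a b)
  subst hcan
  refine ⟨Bg.starCounit, Bialgebroid.antipode hbij, fun a b => Bg.starCounit_mk (a ⊗ₜ b),
    fun a => ?_, Bialgebroid.antipode_mul_src hbij, Bialgebroid.antipode_tgt_mul hbij,
    Bialgebroid.mul'_lTensor_antipode_comul hbij, Bialgebroid.mul'_rTensor_antipode_comul hbij⟩
  have hγinv : γinv (Submodule.Quotient.mk (a ⊗ₜ 1)) =
      (LinearEquiv.ofBijective Bg.can hbij).symm (Submodule.Quotient.mk (a ⊗ₜ 1)) :=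
    (LinearEquiv.ofBijective Bg.can hbij).eq_symm_apply.2 (hinv _)
  rw [hγinv]
  rfl

end Stmt10
end Bialgebroid
end

section
/- Let L ⊣ R be an adjunction between categories 𝒜 and ℬ with unit ν and counit ε, let T be a comonad on 𝒜 with counit ε^T and comultiplication δ^T, and let λ : L T → S L be a comonad morphism to a comonad S on ℬ. Then the endofunctor L T R on ℬ carries a comonad structure with comultiplication (L T ν T R) ∘ (L δ^T R) : L T R → L T R L T R and counit ε ∘ (L ε^T R) : L T R → Id_ℬ, and β := (S ε) ∘ (λ R) : L T R → S is a morphism of comonads (the identity functor on ℬ together with β is a comonad morphism). -/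
open CategoryTheory

/-!
`L T R` is the comonad of the composite adjunction `Coalg T ⇄ A ⇄ B` (forgetful functor followed
by `L`, right adjoint `R` followed by the cofree functor), so its comonad axioms come for free.
For `β`, naturality of `λ` and a triangle identity reduce the comultiplication law to that of `λ`,
and naturality of `ε^S` reduces the counit law to that of `λ`.
-/

namespace CategoryTheory.Adjunction

variable {A B : Type*} [Category A] [Category B] {L : A ⥤ B} {R : B ⥤ A}

-- Re-typed on `R ⋙ T ⋙ L`, and reducible, so that components of morphisms out of it are
-- seen to start at `L (T (R X))`.
abbrev liftComonad (adj : L ⊣ R) (T : Comonad A) : Comonad B :=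
  { ((Comonad.adj T).comp adj).toComonad with toFunctor := R ⋙ T.toFunctor ⋙ L }

lemma liftComonad_δ (adj : L ⊣ R) (T : Comonad A) :
    (adj.liftComonad T).δ =
      Functor.whiskerLeft R (Functor.whiskerRight T.δ L) ≫
        Functor.whiskerLeft (R ⋙ T.toFunctor) (Functor.whiskerRight adj.unit (T.toFunctor ⋙ L)) := by
  ext X
  simp only [Functor.comp_obj, toComonad_δ, Functor.whiskerRight_app, Functor.whiskerLeft_app,
    comp_unit_app, Comonad.adj_unit, Comonad.cofree_obj_a, Functor.comp_map, NatTrans.comp_app]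
  rw [← L.map_comp]
  rfl

lemma liftComonad_ε (adj : L ⊣ R) (T : Comonad A) :
    (adj.liftComonad T).ε = Functor.whiskerLeft R (Functor.whiskerRight T.ε L) ≫ adj.counit := by
  ext X
  simp only [toComonad_ε, comp_counit_app, Comonad.adj_counit, NatTrans.comp_app,
    Functor.whiskerLeft_app, Functor.whiskerRight_app]
  rfl

def liftComonadHom (adj : L ⊣ R) {T : Comonad A} {S : Comonad B}
    (l : T.toFunctor ⋙ L ⟶ L ⋙ S.toFunctor)
    (hl1 : Functor.whiskerRight T.δ L ≫ Functor.whiskerLeft T.toFunctor l ≫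
        Functor.whiskerRight l S.toFunctor = l ≫ Functor.whiskerLeft L S.δ)
    (hl2 : l ≫ Functor.whiskerLeft L S.ε = Functor.whiskerRight T.ε L) :
    adj.liftComonad T ⟶ S where
  toNatTrans := Functor.whiskerLeft R l ≫ Functor.whiskerRight adj.counit S.toFunctor
  app_ε X := by
    have hl2X := NatTrans.congr_app hl2 (R.obj X)
    dsimp at hl2X ⊢
    rw [Category.assoc, S.counit_naturality, reassoc_of% hl2X, liftComonad_ε]
    rfl
  app_δ X := by
    have hl1X := NatTrans.congr_app hl1 (R.obj X)
    have hlη := l.naturality (adj.unit.app (T.obj (R.obj X)))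
    dsimp at hl1X hlη ⊢
    rw [liftComonad_δ]
    dsimp
    simp only [Category.assoc]
    rw [S.delta_naturality, ← reassoc_of% hl1X, reassoc_of% hlη, ← S.map_comp_assoc,
      adj.left_triangle_components, S.map_id, Category.id_comp, S.map_comp]

end CategoryTheory.Adjunction

open Adjunction in
/-- Given an adjunction `L ⊣ R`, a comonad `T` on `𝒜` and a comonad morphism
`λ : L T ⟶ S L` to a comonad `S` on `ℬ`, the endofunctor `L T R` carries a comonad
structure with comultiplication `(L T ν T R) ∘ (L δ^T R)` and counit `ε ∘ (L ε^T R)`,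
and `β := (S ε) ∘ (λ R) : L T R ⟶ S` is a morphism of comonads. -/
theorem stmt15 {A : Type*} [Category A] {B : Type*} [Category B]
    (L : A ⥤ B) (R : B ⥤ A) (adj : L ⊣ R)
    (T : Comonad A) (S : Comonad B)
    (l : T.toFunctor ⋙ L ⟶ L ⋙ S.toFunctor)
    (hl1 : (Functor.whiskerRight T.δ L ≫ Functor.whiskerLeft T.toFunctor l ≫ Functor.whiskerRight l S.toFunctor :
        T.toFunctor ⋙ L ⟶ L ⋙ S.toFunctor ⋙ S.toFunctor) = l ≫ Functor.whiskerLeft L S.δ)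
    (hl2 : (l ≫ Functor.whiskerLeft L S.ε : T.toFunctor ⋙ L ⟶ L) = Functor.whiskerRight T.ε L) :
    -- the comonad structure on `G := L T R` (precomposition order: `R ⋙ T ⋙ L`)
    (let G : B ⥤ B := R ⋙ T.toFunctor ⋙ L
     let δhat : G ⟶ G ⋙ G :=
       Functor.whiskerLeft R (Functor.whiskerRight T.δ L) ≫
         Functor.whiskerLeft (R ⋙ T.toFunctor) (Functor.whiskerRight adj.unit (T.toFunctor ⋙ L))
     let εhat : G ⟶ 𝟭 B :=
       Functor.whiskerLeft R (Functor.whiskerRight T.ε L) ≫ adj.counit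
     let β : G ⟶ S.toFunctor :=
       Functor.whiskerLeft R l ≫ Functor.whiskerRight adj.counit S.toFunctor
     -- comonad axioms for (G, δhat, εhat)
     ((δhat ≫ Functor.whiskerLeft G δhat : G ⟶ (G ⋙ G) ⋙ G) = δhat ≫ Functor.whiskerRight δhat G) ∧
     (δhat ≫ Functor.whiskerLeft G εhat = 𝟙 G) ∧
     ((δhat ≫ Functor.whiskerRight εhat G : G ⟶ G) = 𝟙 G) ∧
     -- β is a comonad morphism
     (β ≫ S.δ = δhat ≫ Functor.whiskerLeft G β ≫ Functor.whiskerRight β S.toFunctor) ∧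
     (β ≫ S.ε = εhat)) := by
  intro G δhat εhat β
  let C := adj.liftComonad T
  let φ : C ⟶ S := adj.liftComonadHom l hl1 hl2
  have hδ : δhat = C.δ := (liftComonad_δ adj T).symm
  have hε : εhat = C.ε := (liftComonad_ε adj T).symm
  rw [hδ, hε]
  refine ⟨?_, ?_, ?_, ?_, ?_⟩ <;> ext X
  · exact (C.coassoc X).symm
  · exact C.left_counit X
  · exact C.right_counit X
  · exact φ.app_δ X
  · exact φ.app_ε X
end

section
/- Let X be a set and A a small category with object set X, considered as a monoid in (span(X), ∘, I) where M ∘ N = {(m,n) | s(m) = t(n)}. Suppose there exist x ≠ y in X with A(x,y) = ∅ but A(y,x) ≠ ∅, and A(x,x) ≠ ∅. Then there is a right A-module Q (a span over X with associative unital A-action) for which the map β_Q : {(q,a) | s(q) = t(q) = t(a)} → {(q,a) | s(q) = s(a), t(q) = t(a)}, (q,a) ↦ (q.a, a), is not injective. -/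
/-!
Fix a set `R` of objects closed under the morphisms of `C` (if `R (s f)` then `R (t f)`), e.g. the
objects reachable from `x`. Over each object `u` put the propositions `P` with `P → R u` (two of
them up to `propext` when `R u` holds, one otherwise), all with target `x`, and let a morphism `a`
act by `P ↦ P ∧ R (s a)`. When `b : y ⟶ x` leaves `R`, the two elements `True` and `False` over `x`
become equal after acting by `b`, so `β_Q` identifies `(True, b)` and `(False, b)`.
-/

namespace SpanCat

variable {X : Type} (C : SpanCat X)

def Reachable (x u : X) : Prop := ∃ f : C.A, C.s f = x ∧ C.t f = u

theorem reachable_refl (x : X) : C.Reachable x x := ⟨C.one x, C.s_one x, C.t_one x⟩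

theorem Reachable.trans_hom {C : SpanCat X} {x : X} {f : C.A} (hf : C.Reachable x (C.s f)) :
    C.Reachable x (C.t f) := by
  obtain ⟨g, hgs, hgt⟩ := hf
  exact ⟨C.comp f g hgt.symm, (C.s_comp _ _ _).trans hgs, C.t_comp _ _ _⟩

end SpanCat

namespace SpanMod

variable {X : Type} (C : SpanCat X)

def ofClosed (R : X → Prop) (hR : ∀ f : C.A, R (C.s f) → R (C.t f)) (x₀ : X) : SpanMod X C where
  Q := {p : X × Prop // p.2 → R p.1}
  s q := q.1.1
  t _ := x₀
  act q a _ := ⟨(C.s a, q.1.2 ∧ R (C.s a)), And.right⟩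
  s_act _ _ _ := rfl
  t_act _ _ _ := rfl
  act_assoc q a b _ h := by
    have hRb : R (C.s b) → R (C.s a) := fun hb => h ▸ hR b hb
    ext
    · exact (C.s_comp a b h).symm
    · simp only [C.s_comp]
      exact ⟨fun ⟨⟨hq, _⟩, hb⟩ => ⟨hq, hb⟩, fun ⟨hq, hb⟩ => ⟨⟨hq, hRb hb⟩, hb⟩⟩
  act_one q := by
    ext
    · exact C.s_one _
    · simp only [C.s_one]
      exact and_iff_left_of_imp q.2

theorem not_injective_betaMap_ofClosed (R : X → Prop) (hR : ∀ f : C.A, R (C.s f) → R (C.t f))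
    {x₀ : X} (hx₀ : R x₀) {b : C.A} (hb : C.t b = x₀) (hsb : ¬ R (C.s b)) :
    ¬ Function.Injective (betaMap C (ofClosed C R hR x₀)) := by
  intro hinj
  let q (P : Prop) (hP : P → R x₀) : (ofClosed C R hR x₀).Q := ⟨(x₀, P), hP⟩
  have hact : betaMap C _ ⟨(q True fun _ => hx₀, b), rfl, hb.symm⟩ =
      betaMap C _ ⟨(q False False.elim, b), rfl, hb.symm⟩ := by
    simp [betaMap, ofClosed, hsb]
  simpa [q] using congrArg (fun p => p.1.1.1.2) (hinj hact)

end SpanMod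

theorem stmt17_general {X : Type} (C : SpanCat X) (x y : X)
    (hno : ∀ a : C.A, ¬(C.s a = x ∧ C.t a = y))
    (hyx : ∃ b : C.A, C.s b = y ∧ C.t b = x) :
    ∃ M : SpanMod X C, ¬ Function.Injective (betaMap C M) := by
  obtain ⟨b, hbs, hbt⟩ := hyx
  have hy : ¬ C.Reachable x (C.s b) := by
    rintro ⟨f, hfs, hft⟩
    exact hno f ⟨hfs, hft.trans hbs⟩
  exact ⟨_, SpanMod.not_injective_betaMap_ofClosed C (C.Reachable x)
    (fun _ => SpanCat.Reachable.trans_hom) (C.reachable_refl x) hbt hy⟩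

/-- If `A(x,y) = ∅` but `A(y,x) ≠ ∅` (and `A(x,x) ≠ ∅`) for some `x ≠ y`, then there
is a right `A`-module `Q` for which `β_Q : (q,a) ↦ (q.a, a)` is not injective. -/
theorem stmt17 {X : Type} (C : SpanCat X) (x y : X) (hxy : x ≠ y)
    (hno : ∀ a : C.A, ¬(C.s a = x ∧ C.t a = y))
    (hyx : ∃ b : C.A, C.s b = y ∧ C.t b = x)
    (hxx : ∃ c : C.A, C.s c = x ∧ C.t c = x) :
    ∃ M : SpanMod X C, ¬ Function.Injective (betaMap C M) :=
  stmt17_general C x y hno hyx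
end
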